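/- Let R be a commutative noetherian ring, d ≥ 0 an integer, and M a finitely generated R-module with Ext^i_R(M, R) = 0 for all i ≠ d. Let 0 → P_d → ⋯ → P_1 → P_0 → M → 0 be a resolution of M by finitely generated projective R-modules, with differentials ∂_i : P_i → P_{i−1}. Then the dual sequence 0 → P_0^* → P_1^* → ⋯ → P_{d−1}^* → P_d^* → Ext^d_R(M, R) → 0 is exact, where P^* = Hom_R(P, R), the maps P_{i−1}^* → P_i^* are the duals ∂_i^*, and the last map is the canonical surjection identifying coker(∂_d^*) with Ext^d_R(M, R). In particular, Ext^d_R(M, R) admits a projective resolution of length at most d by finitely generated projective R-modules. -/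

import Mathlib

open CategoryTheory CategoryTheory.Limits

universe u

/-- `M` admits a resolution `0 → P_d → ⋯ → P_1 → P_0 → M → 0` by finitely generated
projective `R`-modules (some `P_i` possibly zero). -/
def HasFinProjResLength (R : Type u) [CommRing R] (d : ℕ) (M : ModuleCat.{u} R) : Prop :=
  ∃ (P : ChainComplex (ModuleCat.{u} R) ℕ) (ε : P.X 0 ⟶ M),
    (∀ i : ℕ, Projective (P.X i)) ∧ (∀ i : ℕ, Module.Finite R (P.X i)) ∧
    (∀ i : ℕ, d < i → IsZero (P.X i)) ∧
    Epi ε ∧ (∃ h0 : P.d 1 0 ≫ ε = 0, (ShortComplex.mk (P.d 1 0) ε h0).Exact) ∧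
    (∀ n : ℕ, P.ExactAt (n + 1))

/-- The Ext modules `Ext^n_R(M, N)` for `R`-modules `M`, `N`. -/
noncomputable def extModule (R : Type u) [CommRing R] (n : ℕ)
    (M N : ModuleCat.{u} R) : ModuleCat.{u} R :=
  ((Ext R (ModuleCat.{u} R) n).obj (Opposite.op M)).obj N

/-! Dualizing the resolution `P_• → M` gives a complex `P_•^*` with cohomology `Ext^•(M, R)`, so
the vanishing hypothesis says `P_•^*` is exact except in degree `d`. Since `P_{d+1} = 0`,
`Ext^d(M, R)` is the cokernel of `∂_d^*`, and read backwards the truncation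
`P_d^* ← ⋯ ← P_0^* ← 0` is a resolution of it by finitely generated projectives, as duals of
such modules are again finitely generated projective. -/

lemma CochainComplex.prev_nat (j : ℕ) : (ComplexShape.up ℕ).prev j = j - 1 := by
  cases j <;> simp

lemma HomologicalComplex.exact_d_pOpcycles {R : Type u} [Ring R] {ι : Type*}
    {c : ComplexShape ι} (K : HomologicalComplex (ModuleCat.{u} R) c) {i j : ι}
    (hi : c.prev j = i) : Function.Exact (K.d i j).hom (K.pOpcycles j).hom :=
  (ShortComplex.ShortExact.moduleCat_exact_iff_function_exact
    (ShortComplex.mk (K.d i j) (K.pOpcycles j) (K.d_pOpcycles i j))).1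
    (ShortComplex.exact_of_g_is_cokernel _ (K.opcyclesIsCokernel i j hi))

lemma HasFinProjResLength.of_iso {R : Type u} [CommRing R] {d : ℕ}
    {M N : ModuleCat.{u} R} (e : M ≅ N) (h : HasFinProjResLength R d M) :
    HasFinProjResLength R d N := by
  obtain ⟨P, ε, hproj, hfin, hbdd, hε, ⟨h0, hexact0⟩, hexact⟩ := h
  refine ⟨P, ε ≫ e.hom, hproj, hfin, hbdd, epi_comp _ _,
    ⟨by rw [reassoc_of% h0, zero_comp], ?_⟩, hexact⟩
  exact ShortComplex.exact_of_iso (ShortComplex.isoMk (S₁ := ShortComplex.mk _ _ h0)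
    (Iso.refl _) (Iso.refl _) e (by simp) (by simp)) hexact0

namespace ChainComplex

variable {R : Type u} [CommRing R] (P : ChainComplex (ModuleCat.{u} R) ℕ)

noncomputable def dualComplex : CochainComplex (ModuleCat.{u} R) ℕ where
  X i := ModuleCat.of R (Module.Dual R (P.X i))
  d i j := ModuleCat.ofHom (P.d j i).hom.dualMap
  shape i j h := by
    rw [P.shape j i h]
    ext
    simp
  d_comp_d' i j k _ _ := by
    rw [← ModuleCat.ofHom_comp, LinearMap.dualMap_comp_dualMap, ← ModuleCat.hom_comp,
      P.d_comp_d]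
    ext
    simp

noncomputable def linearYonedaObjIsoDualComplex :
    P.linearYonedaObj R (ModuleCat.of R R) ≅ P.dualComplex :=
  HomologicalComplex.Hom.isoOfComponents (fun _ ↦ ModuleCat.homLinearEquiv.toModuleIso)
    (fun _ _ _ ↦ rfl)

lemma dualComplex_exactAt_iff (j : ℕ) :
    P.dualComplex.ExactAt j ↔
      Function.Exact (P.d j (j - 1)).hom.dualMap (P.d (j + 1) j).hom.dualMap := by
  rw [HomologicalComplex.exactAt_iff' _ (j - 1) j (j + 1) (CochainComplex.prev_nat j)
    (by simp), ShortComplex.ShortExact.moduleCat_exact_iff_function_exact]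
  rfl

lemma dualComplex_exactAt_zero_iff :
    P.dualComplex.ExactAt 0 ↔ Function.Injective (P.d 1 0).hom.dualMap := by
  have hzero : (P.d 0 0).hom.dualMap = 0 := by
    rw [P.shape 0 0 (by simp)]
    ext
    simp
  rw [dualComplex_exactAt_iff, Nat.zero_sub, hzero, LinearMap.exact_zero_iff_injective]

lemma isZero_dualComplex_X {i : ℕ} (h : IsZero (P.X i)) : IsZero (P.dualComplex.X i) :=
  have := ModuleCat.subsingleton_of_isZero h
  have := (Module.subsingleton_dual_iff R).2 this
  ModuleCat.isZero_of_subsingleton (ModuleCat.of R (Module.Dual R (P.X i)))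

end ChainComplex

namespace CategoryTheory.ProjectiveResolution

noncomputable def ofExact {C : Type*} [Category C] [Abelian C] {X : C} (P : ChainComplex C ℕ)
    (ε : P.X 0 ⟶ X) (hproj : ∀ i, Projective (P.X i)) (h0 : P.d 1 0 ≫ ε = 0)
    (hexact0 : (ShortComplex.mk (P.d 1 0) ε h0).Exact) (hε : Epi ε)
    (hexact : ∀ n, P.ExactAt (n + 1)) : ProjectiveResolution X where
  complex := P
  π := (ChainComplex.toSingle₀Equiv P X).symm ⟨ε, h0⟩
  quasiIso := ⟨fun n ↦ by
    cases n with
    | zero =>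
      rw [ChainComplex.quasiIsoAt₀_iff,
        ShortComplex.quasiIso_iff_of_zeros' _ (P.shape 0 0 (by simp)) rfl rfl]
      refine (ShortComplex.exact_and_epi_g_iff_of_iso ?_).2 ⟨hexact0, hε⟩
      exact ShortComplex.isoMk (Iso.refl _) (Iso.refl _) (Iso.refl _)
        ((Category.id_comp _).trans (Category.comp_id _).symm)
        (by
          simp only [Iso.refl_hom, HomologicalComplex.shortComplexFunctor'_map_τ₂,
            ChainComplex.toSingle₀Equiv_symm_apply_f_zero]
          exact (Category.id_comp _).trans (Category.comp_id _).symm)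
    | succ n =>
      rw [quasiIsoAt_iff_exactAt' _ _ (ChainComplex.exactAt_succ_single_obj _ _)]
      exact hexact n⟩

noncomputable def extModuleIsoHomologyDualComplex {R : Type u} [CommRing R]
    {M : ModuleCat.{u} R} (PR : ProjectiveResolution M) (n : ℕ) :
    extModule R n M (ModuleCat.of R R) ≅ PR.complex.dualComplex.homology n :=
  PR.isoExt n _ ≪≫ HomologicalComplex.homologyMapIso PR.complex.linearYonedaObjIsoDualComplex n

end CategoryTheory.ProjectiveResolution

namespace CochainComplex

open ComplexShape HomologicalComplex

section

variable {C : Type*} [Category C] [Abelian C] (K : CochainComplex C ℕ) (d : ℕ)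

/-- The chain complex `K_d → K_{d-1} → ⋯ → K_0 → 0 → ⋯`: extend `K` by zero to `ℤ`, then
restrict along `n ↦ d - n`. -/
noncomputable def reverseTruncLE : ChainComplex C ℕ :=
  (K.extend (embeddingUpIntGE 0)).restriction (embeddingUpIntLE (d : ℤ))

noncomputable def reverseTruncLEXIso {n : ℕ} (hn : n ≤ d) :
    (K.reverseTruncLE d).X n ≅ K.X (d - n) :=
  K.extendXIso (embeddingUpIntGE 0) (i := d - n)
    (by simp only [embeddingUpIntGE_f, embeddingUpIntLE_f]; omega)

lemma isZero_reverseTruncLE_X {n : ℕ} (hn : d < n) : IsZero ((K.reverseTruncLE d).X n) :=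
  K.isZero_extend_X _ _ (fun i ↦ by simp only [embeddingUpIntGE_f, embeddingUpIntLE_f]; omega)

lemma reverseTruncLE_exactAt_succ (hK : ∀ i < d, K.ExactAt i) (n : ℕ) :
    (K.reverseTruncLE d).ExactAt (n + 1) := by
  rw [exactAt_iff_isZero_homology]
  refine (restrictionHomologyIso _ _ (n + 2) (n + 1) n (by simp) (by simp) rfl rfl rfl
    (by simp only [embeddingUpIntLE_f, prev]; omega)
    (by simp only [embeddingUpIntLE_f, next]; omega)).isZero_iff.2 ?_
  rw [← exactAt_iff_isZero_homology]
  by_cases hn : n + 1 ≤ d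
  · exact (K.extend_exactAt_iff _ (j := d - (n + 1))
      (by simp only [embeddingUpIntGE_f, embeddingUpIntLE_f]; omega)).2 (hK _ (by omega))
  · exact K.extend_exactAt _ _
      (fun i ↦ by simp only [embeddingUpIntGE_f, embeddingUpIntLE_f]; omega)

end

theorem hasFinProjResLength_opcycles {R : Type u} [CommRing R]
    (K : CochainComplex (ModuleCat.{u} R) ℕ) (d : ℕ)
    (hproj : ∀ i, Projective (K.X i)) (hfin : ∀ i, Module.Finite R (K.X i))
    (hK : ∀ i < d, K.ExactAt i) : HasFinProjResLength R d (K.opcycles d) := by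
  refine .of_iso (K.extendOpcyclesIso (embeddingUpIntGE 0) (j := d) (j' := d) (by simp)) ?_
  let E := K.extend (embeddingUpIntGE 0)
  refine ⟨K.reverseTruncLE d, E.pOpcycles _, fun n ↦ ?_, fun n ↦ ?_,
    fun n hn ↦ K.isZero_reverseTruncLE_X d hn, (inferInstance : Epi (E.pOpcycles _)),
    ⟨E.d_pOpcycles _ _, ?_⟩, K.reverseTruncLE_exactAt_succ d hK⟩
  · by_cases hn : n ≤ d
    · exact Projective.of_iso (K.reverseTruncLEXIso d hn).symm (hproj _)
    · exact (K.isZero_reverseTruncLE_X d (not_le.1 hn)).projective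
  · by_cases hn : n ≤ d
    · exact Module.Finite.equiv (K.reverseTruncLEXIso d hn).symm.toLinearEquiv
    · have := ModuleCat.subsingleton_of_isZero (K.isZero_reverseTruncLE_X d (not_le.1 hn))
      infer_instance
  · exact ShortComplex.exact_of_g_is_cokernel _ (E.opcyclesIsCokernel _ _ (by simp))

end CochainComplex

theorem stmt_12_general (R : Type u) [CommRing R] (d : ℕ)
    (M : ModuleCat.{u} R)
    (hMext : ∀ i : ℕ, i ≠ d → IsZero (extModule R i M (ModuleCat.of R R)))
    (P : ChainComplex (ModuleCat.{u} R) ℕ) (ε : P.X 0 ⟶ M)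
    (hproj : ∀ i : ℕ, Projective (P.X i)) (hfin : ∀ i : ℕ, Module.Finite R (P.X i))
    (hbdd : ∀ i : ℕ, d < i → IsZero (P.X i))
    (hε_epi : Epi ε) (h0 : P.d 1 0 ≫ ε = 0)
    (hexact0 : (ShortComplex.mk (P.d 1 0) ε h0).Exact)
    (hexact : ∀ n : ℕ, P.ExactAt (n + 1)) :
    (1 ≤ d → Function.Injective ((P.d 1 0).hom.dualMap)) ∧
    (∀ j : ℕ, 1 ≤ j → j < d →
      Function.Exact ((P.d j (j - 1)).hom.dualMap) ((P.d (j + 1) j).hom.dualMap)) ∧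
    (∃ π : Module.Dual R (P.X d) →ₗ[R] extModule R d M (ModuleCat.of R R),
      Function.Surjective π ∧ Function.Exact ((P.d d (d - 1)).hom.dualMap) π) ∧
    HasFinProjResLength R d (extModule R d M (ModuleCat.of R R)) := by
  let PR := ProjectiveResolution.ofExact P ε hproj h0 hexact0 hε_epi hexact
  let K := P.dualComplex
  have hK : ∀ i ≠ d, K.ExactAt i := fun i hi ↦
    (HomologicalComplex.exactAt_iff_isZero_homology _ _).2
      ((PR.extModuleIsoHomologyDualComplex i).isZero_iff.1 (hMext i hi))
  let eExt : extModule R d M (ModuleCat.of R R) ≅ K.opcycles d :=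
    PR.extModuleIsoHomologyDualComplex d ≪≫ K.isoHomologyι d (d + 1) (by simp)
      ((P.isZero_dualComplex_X (hbdd _ d.lt_succ_self)).eq_of_tgt _ _)
  refine ⟨fun hd ↦ P.dualComplex_exactAt_zero_iff.1 (hK 0 (by omega)),
    fun j _ hj ↦ (P.dualComplex_exactAt_iff j).1 (hK j hj.ne),
    ⟨(K.pOpcycles d ≫ eExt.inv).hom, ?_, ?_⟩,
    .of_iso eExt.symm (K.hasFinProjResLength_opcycles d ?_ ?_ fun i hi ↦ hK i hi.ne)⟩
  · exact (ModuleCat.epi_iff_surjective _).1 inferInstance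
  · exact (K.exact_d_pOpcycles (CochainComplex.prev_nat d)).comp_injective _
      ((ModuleCat.mono_iff_injective eExt.inv).1 inferInstance) (map_zero _)
  · exact fun i ↦ (IsProjective.iff_projective _).1 inferInstance
  · exact fun i ↦ inferInstanceAs (Module.Finite R (Module.Dual R (P.X i)))

/-- Let `R` be a commutative noetherian ring, `d ≥ 0`, and `M` a
finitely generated `R`-module with `Ext^i_R(M, R) = 0` for all `i ≠ d`.  Let
`0 → P_d → ⋯ → P_1 → P_0 → M → 0` be a resolution of `M` by finitely generated
projective `R`-modules.  Then the dual sequence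
`0 → P_0^* → P_1^* → ⋯ → P_d^* → Ext^d_R(M, R) → 0` is exact: the first dual map
`∂_1^* : P_0^* → P_1^*` is injective (when `d ≥ 1`), the sequence is exact at each
interior `P_j^*` (`1 ≤ j ≤ d - 1`), and there is a surjection
`π : P_d^* → Ext^d_R(M, R)` with kernel the image of `∂_d^*` (identifying
`coker (∂_d^*)` with `Ext^d_R(M, R)`).  In particular `Ext^d_R(M, R)` admits a
projective resolution of length at most `d` by finitely generated projective
`R`-modules. -/
theorem stmt_12 (R : Type u) [CommRing R] [IsNoetherianRing R] (d : ℕ)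
    (M : ModuleCat.{u} R) (hMfin : Module.Finite R M)
    (hMext : ∀ i : ℕ, i ≠ d → IsZero (extModule R i M (ModuleCat.of R R)))
    (P : ChainComplex (ModuleCat.{u} R) ℕ) (ε : P.X 0 ⟶ M)
    (hproj : ∀ i : ℕ, Projective (P.X i)) (hfin : ∀ i : ℕ, Module.Finite R (P.X i))
    (hbdd : ∀ i : ℕ, d < i → IsZero (P.X i))
    (hε_epi : Epi ε) (h0 : P.d 1 0 ≫ ε = 0)
    (hexact0 : (ShortComplex.mk (P.d 1 0) ε h0).Exact)
    (hexact : ∀ n : ℕ, P.ExactAt (n + 1)) :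
    (1 ≤ d → Function.Injective ((P.d 1 0).hom.dualMap)) ∧
    (∀ j : ℕ, 1 ≤ j → j < d →
      Function.Exact ((P.d j (j - 1)).hom.dualMap) ((P.d (j + 1) j).hom.dualMap)) ∧
    (∃ π : Module.Dual R (P.X d) →ₗ[R] extModule R d M (ModuleCat.of R R),
      Function.Surjective π ∧ Function.Exact ((P.d d (d - 1)).hom.dualMap) π) ∧
    HasFinProjResLength R d (extModule R d M (ModuleCat.of R R)) :=
  stmt_12_general R d M hMext P ε hproj hfin hbdd hε_epi h0 hexact0 hexact
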